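/- For every propositional formula F over 𝒫 and every weight w (a real number or α), the one-rule LP^MLN program {0 : F} is strongly equivalent to the one-rule LP^MLN program {w : F ∨ ¬F}. -/

import Mathlib

/-! `(F ∨ ¬F)^X` is `F^X ∨ ⊥` when `X ⊨ F` and `⊥ ∨ ⊤` otherwise, so on subsets of `X` it imposes
exactly what `F^X` imposes when `F ∈ 𝔽_X`: adding `0 : F` or `w : F ∨ ¬F` to any program `ℍ`
yields the same soft stable models. Being a tautology, `F ∨ ¬F` multiplies the weight of every
soft stable model by the same factor, whereas `0 : F` multiplies it by `1`; a common nonzero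
factor cancels in the normalization, before the limit `α → ∞` is taken. -/

namespace LPMLN

/-- Propositional formulas over a set of atoms `P`, built from atoms and `⊥`
using `∧`, `∨`, `→`. -/
inductive Formula (P : Type) : Type where
  | atom : P → Formula P
  | bot  : Formula P
  | and  : Formula P → Formula P → Formula P
  | or   : Formula P → Formula P → Formula P
  | imp  : Formula P → Formula P → Formula P
deriving DecidableEq

variable {P : Type} [DecidableEq P]

/-- `¬F` abbreviates `F → ⊥`. -/
def Formula.neg (F : Formula P) : Formula P := .imp F .bot

/-- Classical evaluation of a formula in an interpretation `X ⊆ P`. -/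
def Formula.eval (X : Finset P) : Formula P → Bool
  | .atom p => decide (p ∈ X)
  | .bot => false
  | .and F G => F.eval X && G.eval X
  | .or F G => F.eval X || G.eval X
  | .imp F G => !(F.eval X) || G.eval X

/-- Classical satisfaction `X ⊨ F`. -/
def Formula.sat (X : Finset P) (F : Formula P) : Prop := F.eval X = true

/-- The reduct `F^X`: every maximal subformula not satisfied by `X` is replaced by `⊥`. -/
def Formula.reduct (X : Finset P) : Formula P → Formula P
  | .atom p => if p ∈ X then .atom p else .bot
  | .bot => .bot
  | .and F G => if (Formula.and F G).eval X then .and (F.reduct X) (G.reduct X) else .bot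
  | .or F G => if (Formula.or F G).eval X then .or (F.reduct X) (G.reduct X) else .bot
  | .imp F G => if (Formula.imp F G).eval X then .imp (F.reduct X) (G.reduct X) else .bot

/-- `X` satisfies a (finite) set of formulas. -/
def satSet (X : Finset P) (Γ : Finset (Formula P)) : Prop := ∀ F ∈ Γ, F.sat X

/-- The reduct `Γ^X` of a finite set of formulas. -/
def reductSet (X : Finset P) (Γ : Finset (Formula P)) : Finset (Formula P) :=
  Γ.image (Formula.reduct X)

/-- `X` is a stable model of `Γ` if `X ⊨ Γ^X` and no proper subset of `X` satisfies `Γ^X`. -/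
def StableModel (Γ : Finset (Formula P)) (X : Finset P) : Prop :=
  satSet X (reductSet X Γ) ∧ ∀ Y, Y ⊂ X → ¬ satSet Y (reductSet X Γ)

/-- A weight is a real number (soft) or the symbol `α` (hard). -/
inductive Weight : Type where
  | soft : ℝ → Weight
  | hard : Weight

noncomputable instance : DecidableEq Weight := Classical.decEq _

/-- An LP^MLN program: a finite set of weighted formulas `w : R`. -/
abbrev Program (P : Type) [DecidableEq P] := Finset (Weight × Formula P)

/-- `𝔽_X`: the weighted formulas of `𝔽` whose formula is satisfied by `X`. -/
noncomputable def progSat (𝔽 : Program P) (X : Finset P) : Program P :=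
  𝔽.filter (fun r => r.2.eval X = true)

/-- `𝔽̄`: the formulas of `𝔽`, with weights dropped. -/
noncomputable def formulas (𝔽 : Program P) : Finset (Formula P) := 𝔽.image Prod.snd

/-- `X` is a soft stable model of `𝔽` (i.e. `X ∈ SM[𝔽]`) if `X` is a stable model of `𝔽̄_X`. -/
def SoftStable (𝔽 : Program P) (X : Finset P) : Prop :=
  StableModel (formulas (progSat 𝔽 X)) X

/-- w-expressions: either zero or a formal expression `e^{c₁ + c₂·α}` with `c₁ : ℝ`, `c₂ : ℤ`. -/
inductive WExpr : Type where
  | zero : WExpr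
  | exp : ℝ → ℤ → WExpr

/-- Multiplication of w-expressions: add exponents componentwise; zero is absorbing. -/
def WExpr.mul : WExpr → WExpr → WExpr
  | .zero, _ => .zero
  | _, .zero => .zero
  | .exp a b, .exp c d => .exp (a + c) (b + d)

/-- Inverse of a w-expression: negate both exponents. -/
def WExpr.inv : WExpr → WExpr
  | .zero => .zero
  | .exp a b => .exp (-a) (-b)

/-- Evaluation of a w-expression at a real number `a`. -/
noncomputable def WExpr.eval (a : ℝ) : WExpr → ℝ
  | .zero => 0
  | .exp c₁ c₂ => Real.exp (c₁ + c₂ * a)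

/-- The real contribution of a weight (hard rules contribute `0` to the soft sum). -/
def softWeight : Weight → ℝ
  | .soft r => r
  | .hard => 0

/-- Sum of the weights of the soft rules of `𝔽`. -/
noncomputable def softSum (𝔽 : Program P) : ℝ := ∑ r ∈ 𝔽, softWeight r.1

/-- The number of hard rules of `𝔽`. -/
noncomputable def hardCount (𝔽 : Program P) : ℤ :=
  ((𝔽.filter (fun r => r.1 = Weight.hard)).card : ℤ)

/-- `TW(𝔽) = e^{c₁ + c₂·α}` where `c₁` is the sum of the soft weights and
`c₂` the number of hard rules. -/
noncomputable def TW (𝔽 : Program P) : WExpr := .exp (softSum 𝔽) (hardCount 𝔽)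

open Classical in
/-- `W_𝔽(X) = TW(𝔽_X)` if `X ∈ SM[𝔽]`, and zero otherwise. -/
noncomputable def W (𝔽 : Program P) (X : Finset P) : WExpr :=
  if SoftStable 𝔽 X then TW (progSat 𝔽 X) else .zero

open Classical in
/-- `W^pnt_𝔽(X) = TW(𝔽 \ 𝔽_X)⁻¹` if `X ∈ SM[𝔽]`, and zero otherwise. -/
noncomputable def Wpnt (𝔽 : Program P) (X : Finset P) : WExpr :=
  if SoftStable 𝔽 X then (TW (𝔽 \ progSat 𝔽 X)).inv else .zero

/-- `P_𝔽(X)`: the limit as `a → ∞` of the normalized evaluation of `W_𝔽(X)`. -/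
noncomputable def Pr [Fintype P] (𝔽 : Program P) (X : Finset P) : ℝ :=
  Filter.limUnder Filter.atTop
    (fun a : ℝ => (W 𝔽 X).eval a / ∑ Y : Finset P, (W 𝔽 Y).eval a)

/-- `P^pnt_𝔽(X)`: the limit as `a → ∞` of the normalized evaluation of `W^pnt_𝔽(X)`. -/
noncomputable def PrPnt [Fintype P] (𝔽 : Program P) (X : Finset P) : ℝ :=
  Filter.limUnder Filter.atTop
    (fun a : ℝ => (Wpnt 𝔽 X).eval a / ∑ Y : Finset P, (Wpnt 𝔽 Y).eval a)

/-- Weak equivalence: the same probability distribution. -/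
def WeakEquiv [Fintype P] (𝔽 𝔾 : Program P) : Prop :=
  ∀ X : Finset P, Pr 𝔽 X = Pr 𝔾 X

/-- Strong equivalence of LP^MLN programs. -/
def StrongEquiv [Fintype P] (𝔽 𝔾 : Program P) : Prop :=
  ∀ (ℍ : Program P) (X : Finset P), Pr (𝔽 ∪ ℍ) X = Pr (𝔾 ∪ ℍ) X

/-- Structural equivalence of LP^MLN programs. -/
def StructEquiv (𝔽 𝔾 : Program P) : Prop :=
  ∀ (ℍ : Program P) (X : Finset P), SoftStable (𝔽 ∪ ℍ) X ↔ SoftStable (𝔾 ∪ ℍ) X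

/-- HT satisfaction `⟨Y,X⟩ ⊨ₕₜ F` (at the world "here"). -/
def htSat (Y X : Finset P) : Formula P → Prop
  | .atom p => p ∈ Y
  | .bot => False
  | .and F G => htSat Y X F ∧ htSat Y X G
  | .or F G => htSat Y X F ∨ htSat Y X G
  | .imp F G => (htSat Y X F → htSat Y X G) ∧ (Formula.imp F G).sat X

/-- `⟨Y,X⟩` is an HT model of a set `Γ` of formulas. -/
def HTModel (Γ : Finset (Formula P)) (Y X : Finset P) : Prop :=
  Y ⊆ X ∧ ∀ F ∈ Γ, htSat Y X F

/-- `⟨Y,X⟩` is a soft HT model of an LP^MLN program `𝔽`. -/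
def SoftHT (𝔽 : Program P) (Y X : Finset P) : Prop :=
  Y ⊆ X ∧ ∀ r ∈ progSat 𝔽 X, htSat Y X r.2

/-- The choice formula `{F}^ch = F ∨ ¬F`. -/
def Formula.ch (F : Formula P) : Formula P := .or F F.neg

/-- `{Γ}^ch`, choice formulas of a set of formulas. -/
def chSet (Γ : Finset (Formula P)) : Finset (Formula P) := Γ.image Formula.ch

/-- Renaming of atoms. -/
def Formula.rename {Q : Type} (f : P → Q) : Formula P → Formula Q
  | .atom p => .atom (f p)
  | .bot => .bot
  | .and F G => .and (F.rename f) (G.rename f)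
  | .or F G => .or (F.rename f) (G.rename f)
  | .imp F G => .imp (F.rename f) (G.rename f)

/-- `Δ_{𝒫'}(F)`, a formula over `𝒫 ∪ 𝒫'`; unprimed atoms are `Sum.inl p`,
primed atoms `p'` are `Sum.inr p`. -/
def Formula.delta : Formula P → Formula (P ⊕ P)
  | .atom p => .atom (Sum.inr p)
  | .bot => .bot
  | .and F G => .and F.delta G.delta
  | .or F G => .or F.delta G.delta
  | .imp F G => .and (.imp F.delta G.delta)
      (.imp (F.rename Sum.inl) (G.rename Sum.inl))

/-- `Δ_{𝒫'}(Γ)` for a set of formulas. -/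
def deltaSet (Γ : Finset (Formula P)) : Finset (Formula (P ⊕ P)) :=
  Γ.image Formula.delta

/-- The interpretation `Y' ∪ X` of `𝒫 ∪ 𝒫'`. -/
def primedInterp (Y X : Finset P) : Finset (P ⊕ P) :=
  X.image Sum.inl ∪ Y.image Sum.inr

namespace Formula

lemma reduct_eq_bot_of_eval_eq_false {F : Formula P} {X : Finset P} (h : F.eval X = false) :
    F.reduct X = .bot := by
  cases F <;> simp_all [reduct, eval]

lemma eval_ch (F : Formula P) (X : Finset P) : F.ch.eval X = true := by
  simp [ch, neg, eval]

lemma sat_reduct_ch_iff (F : Formula P) (X Y : Finset P) :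
    (F.ch.reduct X).sat Y ↔ (F.sat X → (F.reduct X).sat Y) := by
  have hneg : F.neg.eval X = !F.eval X := by simp [neg, eval]
  cases hF : F.eval X with
  | false =>
    simp [ch, neg, reduct, eval, sat, hF, reduct_eq_bot_of_eval_eq_false hF]
  | true =>
    have hred : F.neg.reduct X = .bot := reduct_eq_bot_of_eval_eq_false (by simp [hneg, hF])
    simp [ch, reduct, eval, sat, hF, hneg, hred]

end Formula

lemma satSet_reductSet_insert (X Y : Finset P) (G : Formula P) (Γ : Finset (Formula P)) :
    satSet Y (reductSet X (insert G Γ)) ↔ (G.reduct X).sat Y ∧ satSet Y (reductSet X Γ) := by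
  simp only [satSet, reductSet, Finset.image_insert, Finset.forall_mem_insert]

lemma stableModel_congr {Γ Δ : Finset (Formula P)} {X : Finset P}
    (h : ∀ Y, satSet Y (reductSet X Γ) ↔ satSet Y (reductSet X Δ)) :
    StableModel Γ X ↔ StableModel Δ X := by
  simp only [StableModel, h]

lemma progSat_singleton_union (r : Weight × Formula P) (ℍ : Program P) (X : Finset P) :
    progSat ({r} ∪ ℍ) X = if r.2.eval X then insert r (progSat ℍ X) else progSat ℍ X := by
  rw [progSat, Finset.filter_union, Finset.filter_singleton, ← progSat]
  cases r.2.eval X <;> simp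

lemma satSet_reductSet_progSat_singleton_union (r : Weight × Formula P) (ℍ : Program P)
    (X Y : Finset P) :
    satSet Y (reductSet X (formulas (progSat ({r} ∪ ℍ) X))) ↔
      (r.2.sat X → (r.2.reduct X).sat Y) ∧ satSet Y (reductSet X (formulas (progSat ℍ X))) := by
  rw [progSat_singleton_union, Formula.sat]
  cases r.2.eval X
  · simp
  · simp [formulas, Finset.image_insert, satSet_reductSet_insert]

lemma softStable_singleton_ch_union_iff (F : Formula P) (v w : Weight) (ℍ : Program P)
    (X : Finset P) :
    SoftStable ({(w, F.ch)} ∪ ℍ) X ↔ SoftStable ({(v, F)} ∪ ℍ) X := by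
  refine stableModel_congr fun Y => ?_
  rw [satSet_reductSet_progSat_singleton_union, satSet_reductSet_progSat_singleton_union,
    Formula.sat_reduct_ch_iff]
  simp only [Formula.sat, Formula.eval_ch, true_implies]

lemma WExpr.eval_mul (a : ℝ) (x y : WExpr) : (x.mul y).eval a = x.eval a * y.eval a := by
  cases x <;> cases y <;> simp [WExpr.mul, WExpr.eval, ← Real.exp_add]; ring_nf

lemma TW_insert {r : Weight × Formula P} {𝔽 : Program P} (hr : r ∉ 𝔽) :
    TW (insert r 𝔽) = (TW {r}).mul (TW 𝔽) := by
  have hr' : r ∉ 𝔽.filter (fun r => r.1 = Weight.hard) :=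
    fun h => hr (Finset.mem_of_mem_filter _ h)
  simp only [TW, WExpr.mul, softSum, hardCount, Finset.sum_insert hr, Finset.sum_singleton,
    Finset.filter_insert, Finset.filter_singleton]
  split_ifs <;> simp [Finset.card_insert_of_notMem hr', add_comm]

lemma eval_TW_insert (a : ℝ) (r : Weight × Formula P) (𝔽 : Program P) :
    (TW (insert r 𝔽)).eval a = (if r ∈ 𝔽 then 1 else (TW {r}).eval a) * (TW 𝔽).eval a := by
  split_ifs with hr
  · rw [Finset.insert_eq_of_mem hr, one_mul]
  · rw [TW_insert hr, WExpr.eval_mul]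

lemma eval_TW_singleton_soft_zero (a : ℝ) (F : Formula P) :
    (TW ({(Weight.soft 0, F)} : Program P)).eval a = 1 := by
  simp [TW, softSum, hardCount, softWeight, WExpr.eval]

lemma eval_W_singleton_ch_union (a : ℝ) (F : Formula P) (w : Weight) (ℍ : Program P)
    (X : Finset P) :
    (W ({(w, F.ch)} ∪ ℍ) X).eval a =
      (if (w, F.ch) ∈ ℍ then 1 else (TW {(w, F.ch)}).eval a) *
        (W ({(Weight.soft 0, F)} ∪ ℍ) X).eval a := by
  have hmem : (w, F.ch) ∈ progSat ℍ X ↔ (w, F.ch) ∈ ℍ := by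
    simp [progSat, Formula.eval_ch]
  have hsoft : (TW (progSat ({(Weight.soft 0, F)} ∪ ℍ) X)).eval a = (TW (progSat ℍ X)).eval a := by
    rw [progSat_singleton_union]
    split_ifs
    · simp [eval_TW_insert, eval_TW_singleton_soft_zero]
    · rfl
  unfold W
  rw [softStable_singleton_ch_union_iff F (Weight.soft 0)]
  by_cases hs : SoftStable ({(Weight.soft 0, F)} ∪ ℍ) X
  · rw [if_pos hs, if_pos hs, hsoft, progSat_singleton_union, if_pos (F.eval_ch X),
      eval_TW_insert]
    simp only [hmem]
  · simp only [if_neg hs, WExpr.eval, mul_zero]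

lemma weakEquiv_of_eval_W_eq_mul [Fintype P] {𝔽 𝔾 : Program P} (c : ℝ → ℝ)
    (hc : ∀ a, c a ≠ 0) (h : ∀ a Y, (W 𝔾 Y).eval a = c a * (W 𝔽 Y).eval a) :
    WeakEquiv 𝔽 𝔾 := by
  intro X
  unfold Pr
  congr 1
  funext a
  simp only [h, ← Finset.mul_sum, mul_div_mul_left _ _ (hc a)]

/-- `{0 : F}` is strongly equivalent to `{w : F ∨ ¬F}` for any weight `w`. -/
theorem stmt7 {P : Type} [DecidableEq P] [Fintype P] (F : Formula P) (w : Weight) :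
    StrongEquiv ({(Weight.soft 0, F)} : Program P) ({(w, F.ch)} : Program P) := by
  intro ℍ
  refine weakEquiv_of_eval_W_eq_mul
    (fun a => if (w, F.ch) ∈ ℍ then 1 else (TW {(w, F.ch)}).eval a) (fun a => ?_)
    (fun a Y => eval_W_singleton_ch_union a F w ℍ Y)
  split_ifs
  exacts [one_ne_zero, Real.exp_ne_zero _]

end LPMLN
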